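/- Let $V_1 \subseteq \mathbb{F}[\mathbf{y}]$ and $V_2 \subseteq \mathbb{F}[\mathbf{z}]$ be vector spaces of polynomials over disjoint variable sets, with BIWAs $\mathrm{wt}_1: \mathbf{y} \to \mathbb{N}^k$ and $\mathrm{wt}_2: \mathbf{z} \to \mathbb{N}^k$ isolating monomial bases $B_1$ and $B_2$ respectively. Suppose $w: \mathbf{y} \cup \mathbf{z} \to \mathbb{N}$ is a weight assignment that gives distinct weights to all monomials in $B_1 \cdot B_2 = \{m_1 m_2 : m_1 \in B_1, m_2 \in B_2\}$. Then the weight assignment $\mathrm{wt}(x) = (\mathrm{wt}_i(x), w(x)) \in \mathbb{N}^{k+1}$ (where $i$ is 1 or 2 according to whether $x \in \mathbf{y}$ or $x \in \mathbf{z}$) is a BIWA for $V = \mathrm{span}\{f \cdot g : f \in V_1, g \in V_2\}$, isolating the basis $B_1 \cdot B_2$. -/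

import Mathlib

/-- Lexicographic order on weight tuples in `ℕ^k`. -/
def LexLt {k : ℕ} (a b : Fin k → ℕ) : Prop :=
  ∃ i : Fin k, (∀ j : Fin k, j < i → a j = b j) ∧ a i < b i

/-- The column of the space `V` of polynomials indexed by monomial `m`. -/
def col {F Mon : Type*} [Field F] (V : Submodule F (Mon → F)) (m : Mon) :
    V →ₗ[F] F :=
  (LinearMap.proj m).comp V.subtype

/-- `wt` is a basis isolating weight assignment for `V`, isolating the monomial basis `B`. -/
def IsBIWAOn {F Mon : Type*} [Field F] {k : ℕ}
    (wt : Mon → Fin k → ℕ) (V : Submodule F (Mon → F)) (B : Set Mon) : Prop :=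
  (∀ m₁ ∈ B, ∀ m₂ ∈ B, m₁ ≠ m₂ → wt m₁ ≠ wt m₂) ∧
  LinearIndependent F (fun m : B => col V (m : Mon)) ∧
  ∀ m : Mon, m ∉ B →
    col V m ∈ Submodule.span F (col V '' {m' | m' ∈ B ∧ LexLt (wt m') (wt m)})

/-- Additive extension of a weight assignment on variables to multilinear monomials. -/
def wtMon {V : Type*} {k : ℕ} (wt : V → Fin k → ℕ) (S : Finset V) : Fin k → ℕ :=
  ∑ x ∈ S, wt x

/-- Product of a polynomial over the `Y` variables and one over the `Z` variables:
a multilinear monomial over `Y ∪ Z` is identified with a pair of monomials. -/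
def mulPoly {F Y Z : Type*} [Field F] (f : Finset Y → F) (g : Finset Z → F) :
    Finset Y × Finset Z → F :=
  fun p => f p.1 * g p.2

/-!
A column indexed by a pair `(m₁, m₂)` of the span of products evaluates `f * g` to
`f m₁ * g m₂`. Hence a relation among basis columns `(b₁, b₂)` is a relation
`∑ c (b₁, b₂) f(b₁) g(b₂) = 0` for all `f ∈ V₁`, `g ∈ V₂`, which independence of the columns
of `V₂` and then of `V₁` forces to be trivial. Multiplying the expansions of the
columns `m₁` and `m₂` in `B₁` and `B₂` expands the column `(m₁, m₂)` in `B₁ × B₂`. If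
`(m₁, m₂) ∉ B₁ × B₂`, one of the two expansions uses only strictly lighter monomials and the
other only monomials of at most the same weight, so every monomial `(b₁, b₂)` used is
strictly lighter in the first `k` coordinates; the appended coordinate only has to separate
the basis.
-/

theorem lexLt_iff_toLex_lt {k : ℕ} {a b : Fin k → ℕ} : LexLt a b ↔ toLex a < toLex b :=
  Iff.rfl

theorem LexLt.snoc {k : ℕ} {a b : Fin k → ℕ} (s t : ℕ) (h : LexLt a b) :
    LexLt (Fin.snoc a s : Fin (k + 1) → ℕ) (Fin.snoc b t) := by
  obtain ⟨i, hi, hlt⟩ := h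
  refine ⟨i.castSucc, fun j hj => ?_, by simpa using hlt⟩
  obtain ⟨j, rfl⟩ := Fin.exists_castSucc_eq.mpr (Fin.ne_last_of_lt hj)
  simpa using hi j (Fin.castSucc_lt_castSucc_iff.mp hj)

section Columns

variable {F Mon : Type*} [Field F]

theorem col_apply (V : Submodule F (Mon → F)) (m : Mon) (v : V) :
    col V m v = (v : Mon → F) m :=
  rfl

theorem linearCombination_col_apply (V : Submodule F (Mon → F)) (l : Mon →₀ F) (v : V) :
    Finsupp.linearCombination F (col V) l v = ∑ m ∈ l.support, l m * (v : Mon → F) m := by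
  simp [Finsupp.linearCombination_apply, Finsupp.sum, col_apply]

theorem IsBIWAOn.col_mem_span_le {k : ℕ} {wt : Mon → Fin k → ℕ} {V : Submodule F (Mon → F)}
    {B : Set Mon} (h : IsBIWAOn wt V B) (m : Mon) :
    col V m ∈ Submodule.span F (col V '' {m' | m' ∈ B ∧ toLex (wt m') ≤ toLex (wt m)}) := by
  by_cases hm : m ∈ B
  · exact Submodule.subset_span ⟨m, ⟨hm, le_rfl⟩, rfl⟩
  · refine Submodule.span_mono (Set.image_mono ?_) (h.2.2 m hm)
    exact fun m' hm' => ⟨hm'.1, (lexLt_iff_toLex_lt.mp hm'.2).le⟩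

end Columns

section LinearIndependence

variable {F ι₁ ι₂ M₁ M₂ M : Type*} [Field F] [AddCommGroup M₁] [Module F M₁]
  [AddCommGroup M₂] [Module F M₂] [AddCommGroup M] [Module F M]
  {φ : ι₁ → M₁ →ₗ[F] F} {ψ : ι₂ → M₂ →ₗ[F] F}

theorem eq_zero_of_sum_sum_mul_apply_eq_zero (hφ : LinearIndependent F φ)
    (hψ : LinearIndependent F ψ) {s₁ : Finset ι₁} {s₂ : Finset ι₂} {c : ι₁ → ι₂ → F}
    (hc : ∀ x y, ∑ i ∈ s₁, ∑ j ∈ s₂, c i j * (φ i x * ψ j y) = 0) :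
    ∀ i ∈ s₁, ∀ j ∈ s₂, c i j = 0 := by
  have hcoeff : ∀ x, ∀ j ∈ s₂, ∑ i ∈ s₁, c i j * φ i x = 0 := by
    refine fun x => linearIndependent_iff'.mp hψ s₂ _ (LinearMap.ext fun y => ?_)
    simp only [LinearMap.sum_apply, LinearMap.smul_apply, smul_eq_mul, Finset.sum_mul,
      LinearMap.zero_apply]
    rw [Finset.sum_comm, ← hc x y]
    simp only [mul_assoc]
  intro i hi j hj
  refine linearIndependent_iff'.mp hφ s₁ (c · j) (LinearMap.ext fun x => ?_) i hi
  simpa using hcoeff x j hj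

theorem linearIndependent_of_apply_mul (hφ : LinearIndependent F φ)
    (hψ : LinearIndependent F ψ) {χ : ι₁ × ι₂ → M →ₗ[F] F} (μ : M₁ → M₂ → M)
    (hχ : ∀ p x y, χ p (μ x y) = φ p.1 x * ψ p.2 y) : LinearIndependent F χ := by
  classical
  rw [linearIndependent_iff]
  intro l hl
  set s₁ := l.support.image Prod.fst
  set s₂ := l.support.image Prod.snd
  have hsupp : l.support ⊆ s₁ ×ˢ s₂ := fun p hp =>
    Finset.mem_product.mpr ⟨Finset.mem_image_of_mem _ hp, Finset.mem_image_of_mem _ hp⟩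
  have hc : ∀ x y, ∑ i ∈ s₁, ∑ j ∈ s₂, l (i, j) * (φ i x * ψ j y) = 0 := by
    intro x y
    have := congrArg (fun f : M →ₗ[F] F => f (μ x y)) hl
    simp only [Finsupp.linearCombination_apply, Finsupp.sum, LinearMap.sum_apply,
      LinearMap.smul_apply, smul_eq_mul, hχ, LinearMap.zero_apply] at this
    rw [← this, Finset.sum_subset hsupp fun p _ hp => by simp [Finsupp.notMem_support_iff.mp hp],
      Finset.sum_product]
  ext ⟨i, j⟩
  by_contra hne
  have hp := hsupp (Finsupp.mem_support_iff.mpr hne)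
  exact hne (eq_zero_of_sum_sum_mul_apply_eq_zero hφ hψ hc i (Finset.mem_product.mp hp).1 j
    (Finset.mem_product.mp hp).2)

end LinearIndependence

section ProductSpan

variable {F Mon₁ Mon₂ : Type*} [Field F]
  {V₁ : Submodule F (Mon₁ → F)} {V₂ : Submodule F (Mon₂ → F)}

variable (V₁ V₂) in
def prodSpan : Submodule F (Mon₁ × Mon₂ → F) :=
  Submodule.span F {h | ∃ f ∈ V₁, ∃ g ∈ V₂, h = fun p => f p.1 * g p.2}

theorem linearIndependent_col_prodSpan {B₁ : Set Mon₁} {B₂ : Set Mon₂}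
    (h₁ : LinearIndependent F (fun m : B₁ => col V₁ m))
    (h₂ : LinearIndependent F (fun m : B₂ => col V₂ m)) :
    LinearIndependent F (fun m : ↥(B₁ ×ˢ B₂) => col (prodSpan V₁ V₂) m) :=
  (linearIndependent_equiv (Equiv.Set.prod B₁ B₂).symm).mp <|
    linearIndependent_of_apply_mul h₁ h₂
      (fun f g => ⟨_, Submodule.subset_span ⟨f, f.2, g, g.2, rfl⟩⟩) fun _ _ _ => rfl

theorem col_prodSpan_mem_span {S₁ : Set Mon₁} {S₂ : Set Mon₂} {m : Mon₁ × Mon₂}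
    (h₁ : col V₁ m.1 ∈ Submodule.span F (col V₁ '' S₁))
    (h₂ : col V₂ m.2 ∈ Submodule.span F (col V₂ '' S₂)) :
    col (prodSpan V₁ V₂) m ∈ Submodule.span F (col (prodSpan V₁ V₂) '' S₁ ×ˢ S₂) := by
  obtain ⟨l₁, hl₁, hcol₁⟩ := (Finsupp.mem_span_image_iff_linearCombination F).mp h₁
  obtain ⟨l₂, hl₂, hcol₂⟩ := (Finsupp.mem_span_image_iff_linearCombination F).mp h₂
  have hexpand : col (prodSpan V₁ V₂) m =
      ∑ a ∈ l₁.support, ∑ b ∈ l₂.support, (l₁ a * l₂ b) • col (prodSpan V₁ V₂) (a, b) := by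
    refine LinearMap.ext_on Submodule.span_span_coe_preimage ?_
    rintro ⟨_, _⟩ ⟨f, hf, g, hg, rfl⟩
    have e₁ := linearCombination_col_apply V₁ l₁ ⟨f, hf⟩
    have e₂ := linearCombination_col_apply V₂ l₂ ⟨g, hg⟩
    rw [hcol₁, col_apply] at e₁
    rw [hcol₂, col_apply] at e₂
    simp only [col_apply, LinearMap.sum_apply, LinearMap.smul_apply, smul_eq_mul] at e₁ e₂ ⊢
    rw [e₁, e₂, Finset.sum_mul_sum]
    exact Finset.sum_congr rfl fun a _ => Finset.sum_congr rfl fun b _ => by ring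
  rw [hexpand]
  exact Submodule.sum_mem _ fun a ha => Submodule.sum_mem _ fun b hb =>
    Submodule.smul_mem _ _ (Submodule.subset_span ⟨(a, b), ⟨hl₁ ha, hl₂ hb⟩, rfl⟩)

theorem IsBIWAOn.col_prodSpan_mem_span_lt {k : ℕ} {wt₁ : Mon₁ → Fin k → ℕ}
    {wt₂ : Mon₂ → Fin k → ℕ} {B₁ : Set Mon₁} {B₂ : Set Mon₂}
    (h₁ : IsBIWAOn wt₁ V₁ B₁) (h₂ : IsBIWAOn wt₂ V₂ B₂) {m : Mon₁ × Mon₂}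
    (hm : m ∉ B₁ ×ˢ B₂) :
    col (prodSpan V₁ V₂) m ∈ Submodule.span F (col (prodSpan V₁ V₂) ''
      {p | p ∈ B₁ ×ˢ B₂ ∧ toLex (wt₁ p.1 + wt₂ p.2) < toLex (wt₁ m.1 + wt₂ m.2)}) := by
  by_cases hm₁ : m.1 ∈ B₁
  · have hm₂ : m.2 ∉ B₂ := fun hm₂ => hm ⟨hm₁, hm₂⟩
    refine Submodule.span_mono (Set.image_mono ?_)
      (col_prodSpan_mem_span (h₁.col_mem_span_le m.1) (h₂.2.2 m.2 hm₂))
    rintro p ⟨⟨hp₁, hle⟩, ⟨hp₂, hlt⟩⟩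
    exact ⟨⟨hp₁, hp₂⟩, add_lt_add_of_le_of_lt hle hlt⟩
  · refine Submodule.span_mono (Set.image_mono ?_)
      (col_prodSpan_mem_span (h₁.2.2 m.1 hm₁) (h₂.col_mem_span_le m.2))
    rintro p ⟨⟨hp₁, hlt⟩, ⟨hp₂, hle⟩⟩
    exact ⟨⟨hp₁, hp₂⟩, add_lt_add_of_lt_of_le hlt hle⟩

end ProductSpan

/-- a BIWA for a product of spaces of polynomials over disjoint variable
sets, obtained by appending a coordinate separating the product basis `B₁ ⋅ B₂`. -/
theorem biwa_of_products {F Y Z : Type*} [Field F] {k : ℕ}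
    (V₁ : Submodule F (Finset Y → F)) (V₂ : Submodule F (Finset Z → F))
    (wt₁ : Y → Fin k → ℕ) (wt₂ : Z → Fin k → ℕ)
    (B₁ : Set (Finset Y)) (B₂ : Set (Finset Z))
    (h₁ : IsBIWAOn (wtMon wt₁) V₁ B₁) (h₂ : IsBIWAOn (wtMon wt₂) V₂ B₂)
    (w : Y ⊕ Z → ℕ)
    (hsep : ∀ p q : Finset Y × Finset Z, p.1 ∈ B₁ → p.2 ∈ B₂ → q.1 ∈ B₁ → q.2 ∈ B₂ →
      p ≠ q →
      ((∑ x ∈ p.1, w (Sum.inl x)) + ∑ x ∈ p.2, w (Sum.inr x)) ≠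
      ((∑ x ∈ q.1, w (Sum.inl x)) + ∑ x ∈ q.2, w (Sum.inr x))) :
    IsBIWAOn
      (fun p : Finset Y × Finset Z =>
        Fin.snoc (wtMon wt₁ p.1 + wtMon wt₂ p.2)
          ((∑ x ∈ p.1, w (Sum.inl x)) + ∑ x ∈ p.2, w (Sum.inr x)))
      (Submodule.span F {h : Finset Y × Finset Z → F | ∃ f ∈ V₁, ∃ g ∈ V₂, h = mulPoly f g})
      {p : Finset Y × Finset Z | p.1 ∈ B₁ ∧ p.2 ∈ B₂} := by
  change IsBIWAOn _ (prodSpan V₁ V₂) (B₁ ×ˢ B₂)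
  refine ⟨fun p hp q hq hne hwt => ?_, linearIndependent_col_prodSpan h₁.2.1 h₂.2.1,
    fun m hm => ?_⟩
  · exact hsep p q hp.1 hp.2 hq.1 hq.2 hne (by simpa using congrFun hwt (Fin.last k))
  · refine Submodule.span_mono (Set.image_mono ?_) (h₁.col_prodSpan_mem_span_lt h₂ hm)
    rintro p ⟨hp, hlt⟩
    exact ⟨hp, LexLt.snoc _ _ hlt⟩
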